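/- Let f : X → X be a homeomorphism of a compact connected metric space such that the interior of CR(f) is nonempty, the set of chain components of f is finite, and f has shadowing on X. Then f is a mixing homeomorphism. -/

import Mathlib

open Metric Filter Topology Set

variable {X : Type*}

/-- `(c i)_{i=0}^k` is a `δ`-chain of `f` (up to index `k`). -/
def IsDeltaChain [MetricSpace X] (f : X → X) (δ : ℝ) (k : ℕ) (c : ℕ → X) : Prop :=
  ∀ i < k, dist (f (c i)) (c (i + 1)) ≤ δ

/-- `x → y` : for every `δ > 0` there is a `δ`-chain from `x` to `y`. -/
def ChainReach [MetricSpace X] (f : X → X) (x y : X) : Prop :=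
  ∀ δ > 0, ∃ k ≥ 1, ∃ c : ℕ → X, c 0 = x ∧ c k = y ∧ IsDeltaChain f δ k c

/-- The chain recurrent set. -/
def ChainRec [MetricSpace X] (f : X → X) : Set X := {x | ChainReach f x x}

/-- `C` is a chain component of `f`. -/
def IsChainComponent [MetricSpace X] (f : X → X) (C : Set X) : Prop :=
  ∃ x, ChainReach f x x ∧
    C = {y | ChainReach f y y ∧ ChainReach f x y ∧ ChainReach f y x}

/-- A set is chain stable iff points chain-reachable from it stay in it. -/
def ChainStable [MetricSpace X] (f : X → X) (S : Set X) : Prop :=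
  ∀ x ∈ S, ∀ y, ChainReach f x y → y ∈ S

/-- `S` is "initially stable": if `y → x` with `x ∈ S` then `y ∈ S`. -/
def InitialStable [MetricSpace X] (f : X → X) (S : Set X) : Prop :=
  ∀ x ∈ S, ∀ y, ChainReach f y x → y ∈ S

/-- `f` restricted to `Λ` is chain transitive. -/
def ChainTransitiveOn [MetricSpace X] (f : X → X) (Λ : Set X) : Prop :=
  ∀ p ∈ Λ, ∀ q ∈ Λ, ∀ δ > 0, ∃ k ≥ 1, ∃ c : ℕ → X,
    c 0 = p ∧ c k = q ∧ (∀ i ≤ k, c i ∈ Λ) ∧ IsDeltaChain f δ k c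

/-- `f` has shadowing on `S`. -/
def ShadowsOn [MetricSpace X] (f : X → X) (S : Set X) : Prop :=
  ∀ ε > 0, ∃ δ > 0, ∀ (k : ℕ) (c : ℕ → X), (∀ i ≤ k, c i ∈ S) →
    IsDeltaChain f δ k c → ∃ x, ∀ i ≤ k, dist (c i) (f^[i] x) ≤ ε

/-- Iterate of a homeomorphism indexed by `ℤ`. -/
def hIter [TopologicalSpace X] (f : X ≃ₜ X) (i : ℤ) : X → X :=
  if 0 ≤ i then (⇑f)^[i.toNat] else (⇑f.symm)^[(-i).toNat]

/-- A `δ`-limit-pseudo orbit of the homeomorphism `f`. -/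
def IsLimitPseudoOrbit [MetricSpace X] (f : X ≃ₜ X) (δ : ℝ) (ξ : ℤ → X) : Prop :=
  (∀ i : ℤ, dist (f (ξ i)) (ξ (i + 1)) ≤ δ) ∧
  Tendsto (fun i : ℤ => dist (f (ξ i)) (ξ (i + 1))) atBot (nhds 0) ∧
  Tendsto (fun i : ℤ => dist (f (ξ i)) (ξ (i + 1))) atTop (nhds 0)

/-- `f` has L-shadowing on `S`. -/
def LShadowsOn [MetricSpace X] (f : X ≃ₜ X) (S : Set X) : Prop :=
  ∀ ε > 0, ∃ δ > 0, ∀ ξ : ℤ → X, (∀ i : ℤ, ξ i ∈ S) →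
    IsLimitPseudoOrbit f δ ξ →
    ∃ x : X, (∀ i : ℤ, dist (ξ i) (hIter f i x) ≤ ε) ∧
      Tendsto (fun i : ℤ => dist (ξ i) (hIter f i x)) atBot (nhds 0) ∧
      Tendsto (fun i : ℤ => dist (ξ i) (hIter f i x)) atTop (nhds 0)

/-- `f` is expansive on `S`. -/
def ExpansiveOn [MetricSpace X] (f : X ≃ₜ X) (S : Set X) : Prop :=
  ∃ e > 0, ∀ x y : X, (∀ i : ℤ, hIter f i x ∈ S) → (∀ i : ℤ, hIter f i y ∈ S) →
    (∀ i : ℤ, dist (hIter f i x) (hIter f i y) ≤ e) → x = y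

/-- Closed `b`-neighborhood of `S`. -/
def Nbhd [MetricSpace X] (b : ℝ) (S : Set X) : Set X := {x | Metric.infDist x S ≤ b}

/-- Attractor for a continuous map `f`. -/
def IsAttractor [TopologicalSpace X] (f : X → X) (Λ : Set X) : Prop :=
  IsClosed Λ ∧ f '' Λ = Λ ∧
    ∃ U : Set X, IsOpen U ∧ f '' closure U ⊆ U ∧ Λ = ⋂ i : ℕ, f^[i] '' U

/-- `f` is (topologically) mixing. -/
def IsMixing [TopologicalSpace X] (f : X → X) : Prop :=
  ∀ U V : Set X, IsOpen U → IsOpen V → U.Nonempty → V.Nonempty →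
    ∃ j : ℕ, ∀ i ≥ j, (f^[i] '' U ∩ V).Nonempty

/-- The ω-limit set of `x` under `f`. -/
def OmegaSet [TopologicalSpace X] (f : X → X) (x : X) : Set X :=
  {y | ∃ φ : ℕ → ℕ, StrictMono φ ∧ Tendsto (fun j => f^[φ j] x) atTop (nhds y)}

/-- `M` is a minimal set for `f`. -/
def IsMinimalSet [TopologicalSpace X] (f : X → X) (M : Set X) : Prop :=
  M.Nonempty ∧ IsClosed M ∧ f '' M ⊆ M ∧ ∀ x ∈ M, OmegaSet f x = M

section ChainAPI
variable [MetricSpace X] {g : X → X} {δ δ' s : ℝ} {x x' y y' z : X} {k l : ℕ}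

/-- `δ`-chain from `x` to `y` of length `k`. -/
def ChainTo [MetricSpace X] (g : X → X) (δ : ℝ) (x y : X) (k : ℕ) : Prop :=
  ∃ c : ℕ → X, c 0 = x ∧ c k = y ∧ IsDeltaChain g δ k c

lemma chainReach_def : ChainReach g x y ↔ ∀ δ > 0, ∃ k ≥ 1, ChainTo g δ x y k := Iff.rfl

lemma IsDeltaChain.mono (h : IsDeltaChain g δ k c) (hδ : δ ≤ δ') : IsDeltaChain g δ' k c :=
  fun i hi => (h i hi).trans hδ

lemma ChainTo.mono (h : ChainTo g δ x y k) (hδ : δ ≤ δ') : ChainTo g δ' x y k := by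
  obtain ⟨c, h0, h1, h2⟩ := h; exact ⟨c, h0, h1, h2.mono hδ⟩

lemma ChainTo.trans (h1 : ChainTo g δ x y k) (h2 : ChainTo g δ y z l) :
    ChainTo g δ x z (k + l) := by
  obtain ⟨c, hc0, hck, hc⟩ := h1
  obtain ⟨d, hd0, hdl, hd⟩ := h2
  refine ⟨fun i => if i ≤ k then c i else d (i - k), by simp [hc0], ?_, ?_⟩
  · rcases Nat.eq_zero_or_pos l with hl | hl
    · subst hl; simpa [hck, hd0] using hdl.symm ▸ (by rw [← hd0, hdl] : y = z)
    · have h : ¬ (k + l ≤ k) := by omega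
      simp only [h, if_neg, not_false_iff]
      simpa using hdl
  · intro i hi
    by_cases h1i : i + 1 ≤ k
    · have h2i : i ≤ k := by omega
      simpa [h2i, h1i] using hc i (by omega)
    · by_cases h2i : i ≤ k
      · have hik : i = k := by omega
        subst hik
        simp only [le_refl, if_pos, h1i, if_neg, not_false_iff]
        have : i + 1 - i = 1 := by omega
        rw [this, hck, ← hd0]
        exact hd 0 (by omega)
      · simp only [h2i, if_neg, h1i, not_false_iff]
        have h3 : i + 1 - k = (i - k) + 1 := by omega
        rw [h3]
        exact hd (i - k) (by omega)

lemma ChainTo.endswap (h : ChainTo g δ x y k) (hk : 1 ≤ k) (hs : dist y y' ≤ s) :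
    ChainTo g (δ + s) x y' k := by
  obtain ⟨c, hc0, hck, hc⟩ := h
  have hs0 : 0 ≤ s := le_trans dist_nonneg hs
  refine ⟨fun i => if i = k then y' else c i, by simp [hc0]; omega, by simp, ?_⟩
  intro i hi
  have hik : ¬ (i = k) := by omega
  simp only [hik, if_neg, not_false_iff]
  by_cases h1 : i + 1 = k
  · simp only [h1, if_pos]
    calc dist (g (c i)) y' ≤ dist (g (c i)) (c (i+1)) + dist (c (i+1)) y' := dist_triangle _ _ _
    _ ≤ δ + s := add_le_add (hc i hi) (by rw [h1, hck]; exact hs)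
  · simp only [h1, if_neg, not_false_iff]
    exact (hc i hi).trans (by linarith)

lemma ChainTo.startswap (h : ChainTo g δ x y k) (hk : 1 ≤ k) (hs : dist (g x') (g x) ≤ s) :
    ChainTo g (δ + s) x' y k := by
  obtain ⟨c, hc0, hck, hc⟩ := h
  have hs0 : 0 ≤ s := le_trans dist_nonneg hs
  refine ⟨fun i => if i = 0 then x' else c i, by simp, by simp [hck]; omega, ?_⟩
  intro i hi
  by_cases h0 : i = 0
  · subst h0
    have h1 : ¬ (0 + 1 = 0) := by omega
    simp only [if_pos, h1, if_neg, not_false_iff]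
    calc dist (g x') (c 1) ≤ dist (g x') (g x) + dist (g x) (c 1) := dist_triangle _ _ _
    _ ≤ s + δ := add_le_add hs (by rw [← hc0]; exact hc 0 (by omega))
    _ = δ + s := by ring
  · have h1 : ¬ (i + 1 = 0) := by omega
    simp only [h0, if_neg, not_false_iff, h1]
    exact (hc i hi).trans (by linarith)

lemma chainTo_orbit (g : X → X) (hδ : 0 ≤ δ) (x : X) (k : ℕ) : ChainTo g δ x (g^[k] x) k :=
  ⟨fun i => g^[i] x, rfl, rfl, fun i _ => by
    show dist (g (g^[i] x)) (g^[i + 1] x) ≤ δ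
    rw [Function.iterate_succ_apply']; simpa using hδ⟩

lemma ChainReach.trans (h1 : ChainReach g x y) (h2 : ChainReach g y z) : ChainReach g x z := by
  intro δ hδ
  obtain ⟨k, hk, hc⟩ := h1 δ hδ
  obtain ⟨l, hl, hd⟩ := h2 δ hδ
  exact ⟨k + l, by omega, ChainTo.trans hc hd⟩

lemma chainReach_iterate (g : X → X) (x : X) (hk : 1 ≤ k) : ChainReach g x (g^[k] x) :=
  fun δ hδ => ⟨k, hk, chainTo_orbit g (le_of_lt hδ) x k⟩

lemma chainReach_apply (g : X → X) (x : X) : ChainReach g x (g x) := by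
  simpa using chainReach_iterate g x (k := 1) le_rfl
end ChainAPI

section Aux2
variable [MetricSpace X] [CompactSpace X] {g : X → X} {δ : ℝ} {v x y z w w' : X} {k : ℕ}

lemma unif_cont (hg : Continuous g) {γ : ℝ} (hγ : 0 < γ) :
    ∃ η > 0, η ≤ γ ∧ ∀ a b : X, dist a b ≤ η → dist (g a) (g b) ≤ γ := by
  have h := CompactSpace.uniformContinuous_of_continuous hg
  rw [Metric.uniformContinuous_iff] at h
  obtain ⟨d, hd, h⟩ := h γ hγ
  refine ⟨min (d/2) γ, by positivity, min_le_right _ _, fun a b hab => ?_⟩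
  exact le_of_lt (h (lt_of_le_of_lt hab (lt_of_le_of_lt (min_le_left _ _) (by linarith))))

lemma reach_of_orbit_cluster {g : X → X}
    (hw : ∀ η > 0, ∀ N : ℕ, ∃ n ≥ N, dist (g^[n] y) w ≤ η) : ChainReach g y w := by
  rw [chainReach_def]
  intro δ hδ
  obtain ⟨n, hn1, hnd⟩ := hw δ hδ 1
  refine ⟨n, hn1, ((chainTo_orbit g le_rfl y n).endswap hn1 hnd).mono (by linarith)⟩

lemma reach_cluster_cluster (hg : Continuous g)
    (hw : ∀ η > 0, ∀ N : ℕ, ∃ n ≥ N, dist (g^[n] y) w ≤ η)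
    (hw' : ∀ η > 0, ∀ N : ℕ, ∃ n ≥ N, dist (g^[n] y) w' ≤ η) :
    ChainReach g w w' := by
  rw [chainReach_def]
  intro δ hδ
  obtain ⟨η, hη, hηγ, hcont⟩ := unif_cont hg (γ := δ/2) (by positivity)
  obtain ⟨m, hm1, hmd⟩ := hw η hη 1
  obtain ⟨n, hn, hnd⟩ := hw' (δ/2) (by positivity) (m+1)
  have horb : ChainTo g 0 (g^[m] y) (g^[n] y) (n - m) := by
    have h := chainTo_orbit g le_rfl (g^[m] y) (n - m)
    rwa [← Function.iterate_add_apply, Nat.sub_add_cancel (by omega)] at h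
  have h1 := horb.endswap (by omega) hnd
  have h2 := h1.startswap (by omega) (hcont w (g^[m] y) (by rwa [dist_comm] at hmd))
  exact ⟨n - m, by omega, h2.mono (by linarith)⟩

lemma exists_orbit_cluster (g : X → X) (y : X) :
    ∃ w : X, ∀ η > 0, ∀ N : ℕ, ∃ n ≥ N, dist (g^[n] y) w ≤ η := by
  obtain ⟨w, -, φ, hφ, hlim⟩ := isCompact_univ.tendsto_subseq
    (x := fun n => g^[n] y) (fun n => mem_univ _)
  refine ⟨w, fun η hη N => ?_⟩
  rw [Metric.tendsto_atTop] at hlim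
  obtain ⟨J, hJ⟩ := hlim η hη
  refine ⟨φ (max J N), le_trans (le_max_right _ _) hφ.le_apply, ?_⟩
  simpa using le_of_lt (hJ (max J N) (le_max_left _ _))

/-- The chain class of `v`. -/
def Cls [MetricSpace X] (g : X → X) (v : X) : Set X :=
  {y | ChainReach g y y ∧ ChainReach g v y ∧ ChainReach g y v}

lemma cls_closed (hg : Continuous g) (v : X) : IsClosed (Cls g v) := by
  refine IsSeqClosed.isClosed ?_
  intro u y hu hy
  rw [Metric.tendsto_atTop] at hy
  have key : ∀ δ > 0, ∃ n, dist (u n) y ≤ δ ∧ dist (g (u n)) (g y) ≤ δ := by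
    intro δ hδ
    obtain ⟨η, hη, hηδ, hcont⟩ := unif_cont hg hδ
    obtain ⟨N, hN⟩ := hy η hη
    exact ⟨N, le_trans (le_of_lt (hN N le_rfl)) hηδ,
      hcont _ _ (le_of_lt (hN N le_rfl))⟩
  refine ⟨?_, ?_, ?_⟩
  · rw [chainReach_def]; intro δ hδ
    obtain ⟨n, hn1, hn2⟩ := key (δ/4) (by positivity)
    obtain ⟨k, hk, hc⟩ := (hu n).1 (δ/2) (by positivity)
    have hc' : ChainTo g (δ/2) (u n) (u n) k := hc
    have h1 := hc'.endswap hk hn1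
    have hn2' : dist (g y) (g (u n)) ≤ δ/4 := by rw [dist_comm] at hn2; exact hn2
    have h2 := h1.startswap hk hn2'
    exact ⟨k, hk, h2.mono (by linarith)⟩
  · rw [chainReach_def]; intro δ hδ
    obtain ⟨n, hn1, -⟩ := key (δ/2) (by positivity)
    obtain ⟨k, hk, hc⟩ := (hu n).2.1 (δ/2) (by positivity)
    have hc' : ChainTo g (δ/2) v (u n) k := hc
    exact ⟨k, hk, (hc'.endswap hk hn1).mono (by linarith)⟩
  · rw [chainReach_def]; intro δ hδ
    obtain ⟨n, -, hn2⟩ := key (δ/2) (by positivity)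
    obtain ⟨k, hk, hc⟩ := (hu n).2.2 (δ/2) (by positivity)
    have hc' : ChainTo g (δ/2) (u n) v k := hc
    have hn2' : dist (g y) (g (u n)) ≤ δ/2 := by rw [dist_comm] at hn2; exact hn2
    have h2 := hc'.startswap hk hn2'
    exact ⟨k, hk, h2.mono (by linarith)⟩

lemma cls_eq_of_mem {g : X → X} (hz : z ∈ Cls g v) : Cls g v = Cls g z := by
  ext u
  constructor
  · rintro ⟨h1, h2, h3⟩
    exact ⟨h1, hz.2.2.trans h2, h3.trans hz.2.1⟩
  · rintro ⟨h1, h2, h3⟩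
    exact ⟨h1, hz.2.1.trans h2, h3.trans hz.2.2⟩

lemma reach_fz_z (hg : Continuous g) (hz : ChainReach g z z) : ChainReach g (g z) z := by
  rw [chainReach_def]
  intro δ hδ
  obtain ⟨η, hη0, hηle, hcont⟩ := unif_cont hg (γ := δ/2) (by positivity)
  have hθ : 0 < min η (δ/2) := by positivity
  obtain ⟨k, hk, hc⟩ := hz (min η (δ/2)) hθ
  obtain ⟨c, hc0, hc2k, hch⟩ := ChainTo.trans hc hc
  refine ⟨k + k - 1, by omega, fun i => if i = 0 then g z else c (i+1), by simp, ?_, ?_⟩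
  · have h1 : ¬ (k + k - 1 = 0) := by omega
    simp only [h1, if_neg, not_false_iff]
    have h2 : k + k - 1 + 1 = k + k := by omega
    rw [h2, hc2k]
  · intro i hi
    by_cases h0 : i = 0
    · subst h0
      have h1 : ¬ (0 + 1 = 0) := by omega
      simp only [if_pos, h1, if_neg, not_false_iff]
      have s1 : dist (g z) (c 1) ≤ min η (δ/2) := by
        have := hch 0 (by omega); rwa [hc0] at this
      have s2 : dist (g (g z)) (g (c 1)) ≤ δ/2 :=
        hcont _ _ (le_trans s1 (min_le_left _ _))
      calc dist (g (g z)) (c (0 + 1 + 1))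
          ≤ dist (g (g z)) (g (c 1)) + dist (g (c 1)) (c 2) := dist_triangle _ _ _
        _ ≤ δ/2 + min η (δ/2) := add_le_add s2 (hch 1 (by omega))
        _ ≤ δ := by
            have := min_le_right η (δ/2); linarith
    · have h2 : ¬ (i + 1 = 0) := by omega
      show dist (g (if i = 0 then g z else c (i+1))) (if i + 1 = 0 then g z else c (i+1+1)) ≤ δ
      rw [if_neg h0, if_neg h2]
      have := hch (i+1) (by omega)
      exact this.trans (le_trans (min_le_right _ _) (by linarith))

lemma reach_rev (f : X ≃ₜ X) (h : ChainReach (⇑f) x y) : ChainReach (⇑f.symm) y x := by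
  rw [chainReach_def]
  intro δ hδ
  obtain ⟨η, hη0, hηle, hcont⟩ := unif_cont f.symm.continuous hδ
  obtain ⟨k, hk, c, hc0, hck, hc⟩ := h η hη0
  refine ⟨k, hk, fun i => c (k - i), by simpa using hck, by simpa using hc0, ?_⟩
  intro i hi
  show dist (f.symm (c (k - i))) (c (k - (i + 1))) ≤ δ
  have h1 : k - (i + 1) = k - i - 1 := by omega
  have h2 : k - i - 1 + 1 = k - i := by omega
  have h3 := hc (k - i - 1) (by omega)
  rw [h2] at h3
  have h4 := hcont _ _ h3
  rw [Homeomorph.symm_apply_apply] at h4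
  rw [h1, dist_comm]
  exact h4

lemma reach_apply_left (f : X ≃ₜ X) (h : ChainReach (⇑f) (f z) (f z)) :
    ChainReach (⇑f) (f z) z := by
  have h1 := reach_rev f h
  have h2 := reach_fz_z f.symm.continuous h1
  rw [Homeomorph.symm_apply_apply] at h2
  have h3 := reach_rev f.symm h2
  rwa [Homeomorph.symm_symm] at h3

lemma cls_map_mem (f : X ≃ₜ X) : z ∈ Cls (⇑f) v ↔ f z ∈ Cls (⇑f) v := by
  constructor
  · rintro ⟨h1, h2, h3⟩
    have hfz : ChainReach (⇑f) (f z) z := reach_fz_z f.continuous h1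
    exact ⟨hfz.trans (chainReach_apply _ z), h2.trans (chainReach_apply _ z), hfz.trans h3⟩
  · rintro ⟨h1, h2, h3⟩
    have hfz : ChainReach (⇑f) (f z) z := reach_apply_left f h1
    exact ⟨(chainReach_apply _ z).trans hfz, h2.trans hfz, (chainReach_apply _ z).trans h3⟩

lemma cls_iterate_mem (f : X ≃ₜ X) (k : ℕ) : z ∈ Cls (⇑f) v ↔ (⇑f)^[k] z ∈ Cls (⇑f) v := by
  induction k with
  | zero => simp
  | succ n ih =>
      rw [Function.iterate_succ_apply', ← cls_map_mem f, ← ih]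
end Aux2

section PartA
variable [MetricSpace X]

lemma ball_cover {S : Set (Set X)} (hS : S.Finite) :
    (∀ C ∈ S, IsClosed C) → ∀ U : Set X, IsOpen U → U.Nonempty → U ⊆ ⋃₀ S →
      ∃ C ∈ S, ∃ u : X, ∃ ε > 0, ball u ε ⊆ C := by
  refine Set.Finite.induction_on
    (motive := fun S _ => (∀ C ∈ S, IsClosed C) → ∀ U : Set X, IsOpen U → U.Nonempty → U ⊆ ⋃₀ S →
      ∃ C ∈ S, ∃ u : X, ∃ ε > 0, ball u ε ⊆ C) S hS ?_ ?_
  · rintro _ U _ ⟨u, hu⟩ hsub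
    simpa using hsub hu
  · intro a s ha hs ih hcl U hU hne hsub
    by_cases hV : (U ∩ aᶜ).Nonempty
    · have hVo : IsOpen (U ∩ aᶜ) := hU.inter (hcl a (mem_insert _ _)).isOpen_compl
      have hVs : U ∩ aᶜ ⊆ ⋃₀ s := by
        rintro x ⟨hxU, hxa⟩
        rcases hsub hxU with ⟨Cx, hC, hxC⟩
        rcases (mem_insert_iff.mp hC) with rfl | hC
        · exact absurd hxC hxa
        · exact ⟨Cx, hC, hxC⟩
      obtain ⟨Cx, hC, rest⟩ := ih (fun C hC => hcl C (mem_insert_of_mem _ hC)) _ hVo hV hVs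
      exact ⟨Cx, mem_insert_of_mem _ hC, rest⟩
    · have hUa : U ⊆ a := by
        intro x hx
        by_contra hxa
        exact hV ⟨x, hx, hxa⟩
      obtain ⟨u, hu⟩ := hne
      obtain ⟨ε, hε, hball⟩ := (Metric.isOpen_iff.mp hU) u hu
      exact ⟨a, mem_insert _ _, u, ε, hε, hball.trans hUa⟩

variable [CompactSpace X] [ConnectedSpace X]

lemma total_reach (f : X ≃ₜ X)
    (hint0 : (interior (ChainRec (⇑f))).Nonempty)
    (hfin0 : {C : Set X | IsChainComponent (⇑f) C}.Finite)
    (hsh0 : ShadowsOn (⇑f) Set.univ) :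
    ∀ x y : X, ChainReach (⇑f) x y := by
  classical
  have hint : (interior {x | ChainReach (⇑f) x x}).Nonempty := hint0
  have hfin : {C : Set X | ∃ x, ChainReach (⇑f) x x ∧
      C = {y | ChainReach (⇑f) y y ∧ ChainReach (⇑f) x y ∧ ChainReach (⇑f) y x}}.Finite := hfin0
  have hsh : ∀ ε > 0, ∃ δ > 0, ∀ (k : ℕ) (c : ℕ → X), (∀ i ≤ k, c i ∈ Set.univ) →
      IsDeltaChain (⇑f) δ k c → ∃ x, ∀ i ≤ k, dist (c i) ((⇑f)^[i] x) ≤ ε := hsh0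
  set Comp := {C : Set X | ∃ x, ChainReach (⇑f) x x ∧
      C = {y | ChainReach (⇑f) y y ∧ ChainReach (⇑f) x y ∧ ChainReach (⇑f) y x}} with hComp
  have hcomp_closed : ∀ C ∈ Comp, IsClosed C := by
    rintro C ⟨x, hx, rfl⟩
    exact cls_closed f.continuous x
  have hsub : interior {x | ChainReach (⇑f) x x} ⊆ ⋃₀ Comp := by
    intro z hz
    have hzr : ChainReach (⇑f) z z := interior_subset hz
    exact ⟨Cls (⇑f) z, ⟨z, hzr, rfl⟩, hzr, hzr, hzr⟩
  obtain ⟨C, hCmem, v, ε2, hε2, hball2⟩ :=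
    ball_cover hfin hcomp_closed _ isOpen_interior hint hsub
  have hvC : v ∈ C := hball2 (mem_ball_self hε2)
  obtain ⟨xb, hxb, hCeq⟩ := hCmem
  have hvxb : v ∈ Cls (⇑f) xb := by rw [hCeq] at hvC; exact hvC
  have hCv : C = Cls (⇑f) v := hCeq.trans (cls_eq_of_mem hvxb)
  set K := Cls (⇑f) v with hK
  set ε := ε2 / 2 with hε
  have hεpos : 0 < ε := by positivity
  have hball : ball v (2 * ε) ⊆ K := by
    have h2e : 2 * ε = ε2 := by rw [hε]; ring
    rw [h2e]
    intro z hz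
    exact hCv ▸ hball2 hz
  have hvK : v ∈ K := hCv ▸ hvC
  have hKcl : IsClosed K := cls_closed f.continuous v
  have hKne : K.Nonempty := ⟨v, hvK⟩
  have hiter : ∀ (k : ℕ) (z : X), z ∈ K ↔ (⇑f)^[k] z ∈ K := fun k z => cls_iterate_mem f k
  -- A5a
  have hA5a : ∀ y, ChainReach (⇑f) v y → y ∈ K := by
    intro y hvy
    rw [IsClosed.mem_iff_infDist_zero hKcl hKne]
    have hle : ∀ γ > 0, infDist y K ≤ γ := by
      intro γ hγ
      obtain ⟨δ, hδ, hshad⟩ := hsh (min γ ε) (by positivity)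
      obtain ⟨k, hk, c, hc0, hck, hc⟩ := hvy δ hδ
      obtain ⟨x, hx⟩ := hshad k c (fun i _ => mem_univ _) hc
      have hx0 := hx 0 (Nat.zero_le _)
      rw [Function.iterate_zero_apply, hc0] at hx0
      have hxK : x ∈ K := by
        apply hball
        rw [mem_ball, dist_comm]
        calc dist v x ≤ min γ ε := hx0
          _ ≤ ε := min_le_right _ _
          _ < 2 * ε := by linarith
      have hfk : (⇑f)^[k] x ∈ K := (hiter k x).mp hxK
      have hxk := hx k le_rfl
      rw [hck] at hxk
      calc infDist y K ≤ dist y ((⇑f)^[k] x) := infDist_le_dist_of_mem hfk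
        _ ≤ min γ ε := hxk
        _ ≤ γ := min_le_left _ _
    have h0 : infDist y K ≤ 0 :=
      le_of_forall_pos_le_add (fun ε' hε' => by simpa using hle ε' hε')
    exact le_antisymm h0 infDist_nonneg
  -- A5b
  have hA5b : ∀ y, ChainReach (⇑f) y v → y ∈ K := by
    intro y hyv
    rw [IsClosed.mem_iff_infDist_zero hKcl hKne]
    have hle : ∀ γ > 0, infDist y K ≤ γ := by
      intro γ hγ
      obtain ⟨δ, hδ, hshad⟩ := hsh (min γ ε) (by positivity)
      obtain ⟨k, hk, c, hc0, hck, hc⟩ := hyv δ hδ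
      obtain ⟨x, hx⟩ := hshad k c (fun i _ => mem_univ _) hc
      have hxk := hx k le_rfl
      rw [hck] at hxk
      have hfkK : (⇑f)^[k] x ∈ K := by
        apply hball
        rw [mem_ball, dist_comm]
        calc dist v ((⇑f)^[k] x) ≤ min γ ε := hxk
          _ ≤ ε := min_le_right _ _
          _ < 2 * ε := by linarith
      have hxK : x ∈ K := (hiter k x).mpr hfkK
      have hx0 := hx 0 (Nat.zero_le _)
      rw [Function.iterate_zero_apply, hc0] at hx0
      calc infDist y K ≤ dist y x := infDist_le_dist_of_mem hxK
        _ ≤ min γ ε := hx0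
        _ ≤ γ := min_le_left _ _
    have h0 : infDist y K ≤ 0 :=
      le_of_forall_pos_le_add (fun ε' hε' => by simpa using hle ε' hε')
    exact le_antisymm h0 infDist_nonneg
  -- separation constant
  have hrho : ∃ ρ > 0, ∀ w : X, ChainReach (⇑f) w w → infDist w K < ρ → w ∈ K := by
    set T := {D : Set X | D ∈ Comp ∧ D ≠ K} with hT
    have hTfin : T.Finite := hfin.subset (fun D hD => hD.1)
    set Kbig := ⋃₀ T with hKbig
    have hKbigcl : IsClosed Kbig := by
      rw [hKbig, Set.sUnion_eq_biUnion]
      exact hTfin.isClosed_biUnion (fun D hD => hcomp_closed D hD.1)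
    have hmem_big : ∀ w : X, ChainReach (⇑f) w w → w ∉ K → w ∈ Kbig := by
      intro w hw hwK
      refine ⟨Cls (⇑f) w, ⟨⟨w, hw, rfl⟩, ?_⟩, ⟨hw, hw, hw⟩⟩
      intro hEq
      exact hwK (hEq ▸ (⟨hw, hw, hw⟩ : w ∈ Cls (⇑f) w))
    have hdisj : ∀ z ∈ Kbig, z ∉ K := by
      rintro z ⟨D, ⟨hDc, hDne⟩, hzD⟩ hzK
      obtain ⟨xd, hxd, hDeq⟩ := hDc
      apply hDne
      have hzd' : z ∈ Cls (⇑f) xd := by rw [hDeq] at hzD; exact hzD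
      have h1 : D = Cls (⇑f) z := hDeq.trans (cls_eq_of_mem hzd')
      have h2 : K = Cls (⇑f) z := cls_eq_of_mem hzK
      rw [h1, h2]
    rcases eq_empty_or_nonempty Kbig with he | hne2
    · refine ⟨1, one_pos, fun w hw _ => ?_⟩
      by_contra hwK
      have := hmem_big w hw hwK
      rw [he] at this
      exact this
    · obtain ⟨z0, hz0, hmin⟩ := (hKbigcl.isCompact).exists_isMinOn hne2
        (continuous_infDist_pt K).continuousOn
      refine ⟨infDist z0 K, ?_, ?_⟩
      · exact (IsClosed.notMem_iff_infDist_pos hKcl hKne).mp (hdisj z0 hz0)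
      · intro w hw hlt
        by_contra hwK
        exact absurd hlt (not_lt.mpr ((isMinOn_iff.mp hmin) w (hmem_big w hw hwK)))
  -- uniform chain stability
  have hQ : ∀ ε' > 0, ∃ δ > 0, ∀ (k : ℕ) (c : ℕ → X), c 0 ∈ K → IsDeltaChain (⇑f) δ k c →
      ∀ i ≤ k, infDist (c i) K ≤ ε' := by
    intro ε' hε'
    by_contra hcon
    push_neg at hcon
    have hseq : ∀ n : ℕ, ∃ y p : X, p ∈ K ∧ ε' < infDist y K ∧
        ∃ m ≥ 1, ChainTo (⇑f) (((n : ℝ) + 1))⁻¹ p y m := by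
      intro n
      obtain ⟨k, c, h0, hch, i, hik, hbad⟩ := hcon (((n : ℝ) + 1))⁻¹ (by positivity)
      have hi1 : 1 ≤ i := by
        by_contra hi0
        have : i = 0 := by omega
        subst this
        rw [infDist_zero_of_mem h0] at hbad
        linarith
      exact ⟨c i, c 0, h0, hbad, i, hi1, ⟨c, rfl, rfl, fun j hj => hch j (by omega)⟩⟩
    choose y p hpK hbad m hm hchain using hseq
    obtain ⟨w, -, φ, hφ, hlim⟩ := isCompact_univ.tendsto_subseq (x := y) (fun n => mem_univ _)
    have hvw : ChainReach (⇑f) v w := by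
      rw [chainReach_def]
      intro δ hδ
      obtain ⟨M, hM⟩ : ∃ M : ℕ, ((M : ℝ) + 1)⁻¹ ≤ δ/2 := by
        obtain ⟨M, hM'⟩ := exists_nat_gt (2/δ)
        refine ⟨M, ?_⟩
        rw [inv_le_comm₀ (by positivity) (by positivity), inv_div]
        linarith
      rw [Metric.tendsto_atTop] at hlim
      obtain ⟨J, hJ⟩ := hlim (δ/2) (by positivity)
      set j := max J M with hj
      set n := φ j with hn
      have hnM : ((n : ℝ) + 1)⁻¹ ≤ δ/2 := by
        refine le_trans ?_ hM
        have h1 : (M : ℕ) ≤ n := le_trans (le_max_right _ _) hφ.le_apply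
        have h2 : ((M : ℝ) + 1) ≤ ((n : ℝ) + 1) := by
          have := (Nat.cast_le (α := ℝ)).mpr h1; linarith
        exact inv_anti₀ (by positivity) h2
      obtain ⟨k1, hk11, hch1⟩ := (hpK n).2.1 (δ/2) (by positivity)
      have hch1' : ChainTo (⇑f) (δ/2) v (p n) k1 := hch1
      have hch2 : ChainTo (⇑f) (δ/2) (p n) (y n) (m n) := (hchain n).mono hnM
      have hdyw : dist (y n) w ≤ δ/2 := by
        have := hJ j (le_max_left _ _)
        simpa [hn] using le_of_lt this
      have h3 := (hch1'.trans hch2).endswap (by omega) hdyw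
      exact ⟨k1 + m n, by omega, h3.mono (by linarith)⟩
    have hwK : w ∈ K := hA5a w hvw
    have hlim2 : Tendsto (fun j => infDist (y (φ j)) K) atTop (nhds (infDist w K)) :=
      ((continuous_infDist_pt K).tendsto w).comp hlim
    have hge : ε' ≤ infDist w K :=
      ge_of_tendsto hlim2 (Eventually.of_forall (fun j => le_of_lt (hbad (φ j))))
    rw [infDist_zero_of_mem hwK] at hge
    linarith
  -- K is open
  have hKopen : IsOpen K := by
    obtain ⟨ρ, hρ, hρmem⟩ := hrho
    obtain ⟨δQ, hδQ, hQ2⟩ := hQ (ρ/2) (by positivity)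
    have hUK : ∀ y : X, infDist y K < δQ → y ∈ K := by
      intro y hy
      obtain ⟨q, hqK, hqd⟩ := (infDist_lt_iff hKne).mp hy
      have hpK : f.symm q ∈ K := by
        rw [cls_map_mem f (z := f.symm q)]
        simpa using hqK
      have horbit : ∀ n : ℕ, infDist ((⇑f)^[n] y) K ≤ ρ/2 := by
        intro n
        have hchain : IsDeltaChain (⇑f) δQ (n+1)
            (fun i => if i = 0 then f.symm q else (⇑f)^[i-1] y) := by
          intro i hi
          by_cases h0 : i = 0
          · subst h0
            show dist (f (f.symm q)) ((⇑f)^[0 + 1 - 1] y) ≤ δQ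
            simp only [Homeomorph.apply_symm_apply]
            show dist q ((⇑f)^[0] y) ≤ δQ
            simp only [Function.iterate_zero_apply]
            rw [dist_comm]
            exact le_of_lt hqd
          · have h1 : ¬ (i + 1 = 0) := by omega
            show dist (f (if i = 0 then f.symm q else (⇑f)^[i-1] y))
              (if i + 1 = 0 then f.symm q else (⇑f)^[i+1-1] y) ≤ δQ
            rw [if_neg h0, if_neg h1]
            have h2 : i + 1 - 1 = (i - 1) + 1 := by omega
            rw [h2, Function.iterate_succ_apply']
            simpa using le_of_lt hδQ
        have h3 := hQ2 (n+1) _ (by simpa using hpK) hchain (n+1) le_rfl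
        simpa using h3
      obtain ⟨w, hwcl⟩ := exists_orbit_cluster (⇑f) y
      have hwnear : infDist w K ≤ ρ/2 := by
        apply le_of_forall_pos_le_add
        intro θ hθ
        obtain ⟨n, -, hn⟩ := hwcl θ hθ 0
        calc infDist w K ≤ infDist ((⇑f)^[n] y) K + dist w ((⇑f)^[n] y) :=
              infDist_le_infDist_add_dist
          _ ≤ ρ/2 + θ := add_le_add (horbit n) (by rwa [dist_comm] at hn)
      have hwK : w ∈ K := hρmem w (reach_cluster_cluster f.continuous hwcl hwcl)
        (lt_of_le_of_lt hwnear (by linarith))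
      have hyw : ChainReach (⇑f) y w := reach_of_orbit_cluster hwcl
      exact hA5b y (hyw.trans hwK.2.2)
    have hKeq : K = {y : X | infDist y K < δQ} := by
      apply Subset.antisymm
      · intro z hz
        show infDist z K < δQ
        rw [infDist_zero_of_mem hz]
        exact hδQ
      · intro y hy
        exact hUK y hy
    rw [hKeq]
    exact isOpen_lt (continuous_infDist_pt K) continuous_const
  have hKuniv : K = univ := IsClopen.eq_univ ⟨hKcl, hKopen⟩ ⟨v, hvK⟩
  intro x y
  have hx : x ∈ K := by rw [hKuniv]; exact mem_univ x
  have hy : y ∈ K := by rw [hKuniv]; exact mem_univ y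
  exact (hx.2.2).trans (hy.2.1)
end PartA

section PartB
variable [MetricSpace X] [CompactSpace X] [ConnectedSpace X]

lemma chain_mixing (f : X ≃ₜ X) (htot : ∀ x y : X, ChainReach (⇑f) x y)
    {δ : ℝ} (hδ : 0 < δ) (u w : X) :
    ∃ N ≥ 1, ∀ k ≥ N, ChainTo (⇑f) δ u w k := by
  classical
  set S : Set ℕ := {a | 1 ≤ a ∧ ChainTo (⇑f) δ u u a} with hS
  have hSadd : ∀ a ∈ S, ∀ b ∈ S, a + b ∈ S := fun a ha b hb =>
    ⟨by have h1 := ha.1; omega, ha.2.trans hb.2⟩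
  set M : AddSubmonoid ℤ := AddSubmonoid.closure ((fun n : ℕ => (n : ℤ)) '' S) with hM
  set G : AddSubgroup ℤ := AddSubgroup.closure ((fun n : ℕ => (n : ℤ)) '' S) with hG
  have hW : ∀ (y : X) (a a' : ℕ), 1 ≤ a → 1 ≤ a' → ChainTo (⇑f) δ u y a →
      ChainTo (⇑f) (δ/2) u y a' → (a : ℤ) - (a' : ℤ) ∈ G := by
    intro y a a' ha ha' hca hca'
    obtain ⟨b, hb, hcb⟩ := (htot y u) (δ/2) (by positivity)
    have hcb' : ChainTo (⇑f) (δ/2) y u b := hcb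
    have h1 : a + b ∈ S := ⟨by omega, hca.trans (hcb'.mono (by linarith))⟩
    have h2 : a' + b ∈ S := ⟨by omega, (hca'.trans hcb').mono (by linarith)⟩
    have m1 : ((a + b : ℕ) : ℤ) ∈ G := AddSubgroup.subset_closure ⟨a + b, h1, rfl⟩
    have m2 : ((a' + b : ℕ) : ℤ) ∈ G := AddSubgroup.subset_closure ⟨a' + b, h2, rfl⟩
    have h3 := G.sub_mem m1 m2
    have he : ((a + b : ℕ) : ℤ) - ((a' + b : ℕ) : ℤ) = (a:ℤ) - (a' : ℤ) := by push_cast; ring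
    rwa [he] at h3
  set A : Set X := {y | ∃ a : ℕ, 1 ≤ a ∧ ChainTo (⇑f) (δ/2) u y a ∧ (a : ℤ) ∈ G} with hA
  set B : Set X := {y | ∃ a : ℕ, 1 ≤ a ∧ ChainTo (⇑f) (δ/2) u y a ∧ (a : ℤ) ∉ G} with hB
  have hcover : ∀ y : X, y ∈ A ∪ B := by
    intro y
    obtain ⟨a, ha, hc⟩ := htot u y (δ/2) (by positivity)
    by_cases hg : (a : ℤ) ∈ G
    · exact Or.inl ⟨a, ha, hc, hg⟩
    · exact Or.inr ⟨a, ha, hc, hg⟩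
  have hdisj : ∀ y, y ∈ A → y ∈ B → False := by
    rintro y ⟨a, ha, hca, hag⟩ ⟨a', ha', hca', hag'⟩
    have hsub := hW y a a' ha ha' (hca.mono (by linarith)) hca'
    apply hag'
    have h2 : (a' : ℤ) = (a : ℤ) - ((a:ℤ) - (a' : ℤ)) := by ring
    rw [h2]
    exact G.sub_mem hag hsub
  have hAopen : IsOpen A := by
    rw [Metric.isOpen_iff]
    rintro y ⟨a, ha, hca, hag⟩
    refine ⟨δ/2, by positivity, fun y' hy' => ?_⟩
    obtain ⟨a', ha', hca'⟩ := htot u y' (δ/2) (by positivity)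
    have hdyy : dist y y' ≤ δ/2 := by
      rw [dist_comm]; exact le_of_lt (mem_ball.mp hy')
    have hcd : ChainTo (⇑f) δ u y' a := (hca.endswap ha hdyy).mono (by linarith)
    have hsub := hW y' a a' ha ha' hcd hca'
    refine ⟨a', ha', hca', ?_⟩
    have h2 : (a' : ℤ) = (a : ℤ) - ((a:ℤ) - (a' : ℤ)) := by ring
    rw [h2]; exact G.sub_mem hag hsub
  have hBopen : IsOpen B := by
    rw [Metric.isOpen_iff]
    rintro y ⟨a, ha, hca, hag⟩
    refine ⟨δ/2, by positivity, fun y' hy' => ?_⟩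
    obtain ⟨a', ha', hca'⟩ := htot u y' (δ/2) (by positivity)
    have hdyy : dist y y' ≤ δ/2 := by
      rw [dist_comm]; exact le_of_lt (mem_ball.mp hy')
    have hcd : ChainTo (⇑f) δ u y' a := (hca.endswap ha hdyy).mono (by linarith)
    have hsub := hW y' a a' ha ha' hcd hca'
    refine ⟨a', ha', hca', fun hag' => hag ?_⟩
    have h2 : (a : ℤ) = ((a:ℤ) - (a' : ℤ)) + (a' : ℤ) := by ring
    rw [h2]; exact G.add_mem hsub hag'
  have hcomplB : Aᶜ = B := by
    ext y
    constructor
    · intro hy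
      rcases hcover y with h | h
      · exact absurd h hy
      · exact h
    · intro hy hyA
      exact hdisj y hyA hy
  have hAuniv : A = univ := by
    refine IsClopen.eq_univ ⟨?_, hAopen⟩ ?_
    · rw [← isOpen_compl_iff, hcomplB]; exact hBopen
    · obtain ⟨a, ha, hc⟩ := htot u u (δ/2) (by positivity)
      exact ⟨u, a, ha, hc, AddSubgroup.subset_closure
        ⟨a, ⟨ha, ChainTo.mono hc (by linarith)⟩, rfl⟩⟩
  have h1G : (1 : ℤ) ∈ G := by
    have hfu : f u ∈ A := by rw [hAuniv]; trivial
    obtain ⟨a, ha, hca, hag⟩ := hfu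
    have hone : ChainTo (⇑f) (δ/2) u (f u) 1 := by
      have h := chainTo_orbit (⇑f) (le_of_lt (by positivity : (0:ℝ) < δ/2)) u 1
      simpa using h
    have hsub := hW (f u) a 1 ha le_rfl (hca.mono (by linarith)) hone
    have h2 : (1 : ℤ) = (a : ℤ) - ((a:ℤ) - (1 : ℤ)) := by ring
    rw [h2]; exact G.sub_mem hag hsub
  have hMdesc : ∀ x : ℤ, x ∈ M → x = 0 ∨ ∃ n ∈ S, (n : ℤ) = x := by
    intro x hx
    refine AddSubmonoid.closure_induction ?_ ?_ ?_ hx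
    · rintro z ⟨n, hn, rfl⟩
      exact Or.inr ⟨n, hn, rfl⟩
    · exact Or.inl rfl
    · rintro z z' _ _ ih ih'
      rcases ih with rfl | ⟨n, hn, rfl⟩
      · rcases ih' with rfl | ⟨n', hn', rfl⟩
        · exact Or.inl (by ring)
        · exact Or.inr ⟨n', hn', by ring⟩
      · rcases ih' with rfl | ⟨n', hn', rfl⟩
        · exact Or.inr ⟨n, hn, by ring⟩
        · exact Or.inr ⟨n + n', hSadd n hn n' hn', by push_cast; ring⟩
  have hGdesc : ∀ x : ℤ, x ∈ G → ∃ p ∈ M, ∃ q ∈ M, x = p - q := by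
    intro x hx
    refine AddSubgroup.closure_induction ?_ ?_ ?_ ?_ hx
    · intro z hz
      exact ⟨z, AddSubmonoid.subset_closure hz, 0, M.zero_mem, by ring⟩
    · exact ⟨0, M.zero_mem, 0, M.zero_mem, by ring⟩
    · rintro z z' _ _ ⟨p, hp, q, hq, rfl⟩ ⟨p', hp', q', hq', rfl⟩
      exact ⟨p + p', M.add_mem hp hp', q + q', M.add_mem hq hq', by ring⟩
    · rintro z _ ⟨p, hp, q, hq, rfl⟩
      exact ⟨q, hq, p, hp, by ring⟩
  obtain ⟨p, hp, q, hq, hpq⟩ := hGdesc 1 h1G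
  have hbb : ∃ b, 1 ≤ b ∧ b ∈ S ∧ b + 1 ∈ S := by
    rcases hMdesc p hp with rfl | ⟨n, hn, rfl⟩
    · rcases hMdesc q hq with rfl | ⟨m, hm, rfl⟩
      · omega
      · omega
    · rcases hMdesc q hq with rfl | ⟨m, hm, rfl⟩
      · have hn1 : n = 1 := by omega
        subst hn1
        exact ⟨1, le_rfl, hn, hSadd 1 hn 1 hn⟩
      · have hnm : n = m + 1 := by omega
        subst hnm
        exact ⟨m, hm.1, hm, hn⟩
  obtain ⟨b, hb1, hbS, hb1S⟩ := hbb
  have hmul : ∀ j : ℕ, 1 ≤ j → ∀ a, a ∈ S → j * a ∈ S := by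
    intro j
    induction j with
    | zero => intro h; exact absurd h (by omega)
    | succ n ih =>
        intro _ a ha
        rcases Nat.eq_zero_or_pos n with rfl | hn
        · simpa using ha
        · have h2 := hSadd _ (ih hn a ha) _ ha
          have he : n * a + a = (n+1) * a := by ring
          rwa [he] at h2
  have hcof : ∀ m : ℕ, b * b + m ∈ S := by
    intro m
    induction m using Nat.strong_induction_on with
    | _ m ih =>
      by_cases hm : m < b
      · set d := b - m with hd
        have hdb : m + d = b := by omega
        have h1 : b * b + m = m * (b+1) + d * b := by
          rw [← hdb]; ring
        rcases Nat.eq_zero_or_pos m with rfl | hm1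
        · have h3 := hmul b hb1 b hbS
          simpa using h3
        · have hd1 : 1 ≤ d := by omega
          have h3 := hSadd _ (hmul m hm1 (b+1) hb1S) _ (hmul d hd1 b hbS)
          rwa [← h1] at h3
      · have h2 := ih (m - b) (by omega)
        have h3 := hSadd _ h2 _ hbS
        have he2 : m - b + b = m := by omega
        rwa [Nat.add_assoc, he2] at h3
  obtain ⟨s0, hs0, hcs0⟩ := htot u w δ hδ
  have hcs0' : ChainTo (⇑f) δ u w s0 := hcs0
  refine ⟨b*b + s0, le_trans hs0 (Nat.le_add_left s0 (b*b)), fun k hk => ?_⟩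
  have hbbL : b*b ≤ k - s0 := by
    have h4 := Nat.sub_le_sub_right hk s0
    rwa [Nat.add_sub_cancel] at h4
  have hL1 : b*b + (k - s0 - b*b) = k - s0 := Nat.add_sub_cancel' hbbL
  have hloop : ChainTo (⇑f) δ u u (k - s0) := by
    have h5 := (hcof (k - s0 - b*b)).2
    rwa [hL1] at h5
  have hfin2 := hloop.trans hcs0'
  have hks : k - s0 + s0 = k := by
    have hsk : s0 ≤ k := le_trans (Nat.le_add_left s0 (b*b)) hk
    omega
  rwa [hks] at hfin2
end PartB

theorem stmt10 [MetricSpace X] [CompactSpace X] [ConnectedSpace X] (f : X ≃ₜ X)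
    (hint : (interior (ChainRec (⇑f))).Nonempty)
    (hfin : {C : Set X | IsChainComponent (⇑f) C}.Finite)
    (hsh : ShadowsOn (⇑f) Set.univ) :
    IsMixing (⇑f) := by
  have htot : ∀ x y : X, ChainReach (⇑f) x y := total_reach f hint hfin hsh
  intro U V hU hV hUne hVne
  obtain ⟨u, hu⟩ := hUne
  obtain ⟨w, hw⟩ := hVne
  obtain ⟨εU, hεU, hballU⟩ := Metric.isOpen_iff.mp hU u hu
  obtain ⟨εV, hεV, hballV⟩ := Metric.isOpen_iff.mp hV w hw
  set ε := min εU εV / 2 with hε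
  have hεpos : 0 < ε := by positivity
  obtain ⟨δ, hδ, hshad⟩ := hsh ε hεpos
  obtain ⟨N, hN1, hNall⟩ := chain_mixing f htot hδ u w
  refine ⟨N, fun i hi => ?_⟩
  obtain ⟨c, hc0, hci, hchain⟩ := hNall i hi
  obtain ⟨x, hx⟩ := hshad i c (fun j _ => mem_univ _) hchain
  have hx0 := hx 0 (Nat.zero_le _)
  rw [Function.iterate_zero_apply, hc0] at hx0
  have hxi := hx i le_rfl
  rw [hci] at hxi
  have hxU : x ∈ U := by
    apply hballU
    rw [mem_ball, dist_comm]
    have h1 := min_le_left εU εV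
    calc dist u x ≤ ε := hx0
      _ < εU := by rw [hε]; linarith
  have hfV : (⇑f)^[i] x ∈ V := by
    apply hballV
    rw [mem_ball, dist_comm]
    have h1 := min_le_right εU εV
    calc dist w ((⇑f)^[i] x) ≤ ε := hxi
      _ < εV := by rw [hε]; linarith
  exact ⟨(⇑f)^[i] x, ⟨x, hxU, rfl⟩, hfV⟩
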